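/- Let n ≥ 2, 0 < γ < n, 0 < δ < n, a, b ≥ 0 and p, q > 0. Suppose u, v : ℝⁿ → [0,∞) are continuous, solve the integral system (IE) with parameters (γ, δ, a, b, p, q), and (u, v) is not identically (0, 0). Then u(x) > 0 and v(x) > 0 for every x ∈ ℝⁿ, and there exists C > 0 such that u(x) ≥ C·|x|^{−(n−γ)} and v(x) ≥ C·|x|^{−(n−δ)} for all |x| ≥ 1. -/

import Mathlib

open MeasureTheory Metric Set

/-- Spherical average of `w` over the sphere of radius `r` centered at the origin,
with respect to the `(n-1)`-dimensional (Hausdorff) surface measure. -/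
noncomputable def sphAvg (n : ℕ) (w : EuclideanSpace ℝ (Fin n) → ℝ) (r : ℝ) : ℝ :=
  ⨍ x in sphere (0 : EuclideanSpace ℝ (Fin n)) r, w x ∂(μH[(n : ℝ) - 1])
/-- The Riesz potential constant `R_{s,n}`. -/
noncomputable def Rconst (n : ℕ) (s : ℝ) : ℝ :=
  Real.Gamma (((n : ℝ) - s) / 2) / (Real.pi ^ ((n : ℝ) / 2) * 2 ^ s * Real.Gamma (s / 2))
/-- The integral system (IE) with parameters `(γ, δ, a, b, p, q)`:
`u(x) = R_{γ,n} ∫ |y|^a v(y)^p |x-y|^{γ-n} dy`,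
`v(x) = R_{δ,n} ∫ |y|^b u(y)^q |x-y|^{δ-n} dy`, all integrals being finite. -/
def SolvesIE (n : ℕ) (γ δ a b p q : ℝ)
    (u v : EuclideanSpace ℝ (Fin n) → ℝ) : Prop :=
  (∀ x, Integrable (fun y => ‖y‖ ^ a * v y ^ p * ‖x - y‖ ^ (γ - (n : ℝ)))) ∧
  (∀ x, Integrable (fun y => ‖y‖ ^ b * u y ^ q * ‖x - y‖ ^ (δ - (n : ℝ)))) ∧
  (∀ x, u x = Rconst n γ * ∫ y, ‖y‖ ^ a * v y ^ p * ‖x - y‖ ^ (γ - (n : ℝ))) ∧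
  (∀ x, v x = Rconst n δ * ∫ y, ‖y‖ ^ b * u y ^ q * ‖x - y‖ ^ (δ - (n : ℝ)))

/-!
Each component is `R ∫ |y|^e w(y)^r |x-y|^(s-n) dy` with `R > 0`, a continuous nonnegative
density `w` (the other component) and a kernel that is positive off the two points `y = 0`,
`y = x`. So if `v` is positive at one point, it is positive on a ball and `u` is positive
everywhere, hence so is `v`; if instead `u` is positive somewhere, run the same argument from `u`.
Once `v > 0`, its weighted mass `K` on the unit ball is positive, and for `|x| ≥ 1` the kernel
on that ball is at least `(2|x|)^(γ-n)`, whence `u(x) ≥ R K 2^(γ-n) |x|^(γ-n)`.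
-/

lemma Rconst_pos {n : ℕ} {s : ℝ} (hs : 0 < s) (hsn : s < n) : 0 < Rconst n s := by
  have := Real.pi_pos
  have := Real.Gamma_pos_of_pos (show 0 < ((n : ℝ) - s) / 2 by linarith)
  have := Real.Gamma_pos_of_pos (show 0 < s / 2 by linarith)
  unfold Rconst
  positivity

lemma setIntegral_pos_of_ae_pos_on_isOpen {X : Type*} [TopologicalSpace X] [MeasurableSpace X]
    {μ : Measure X} [μ.IsOpenPosMeasure] {f : X → ℝ} {s U : Set X}
    (hf0 : 0 ≤ᵐ[μ.restrict s] f) (hfi : IntegrableOn f s μ)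
    (hU : IsOpen U) (hUne : U.Nonempty) (hUs : U ⊆ s) (hpos : ∀ᵐ y ∂μ, y ∈ U → 0 < f y) :
    0 < ∫ y in s, f y ∂μ := by
  rw [setIntegral_pos_iff_support_of_nonneg_ae hf0 hfi]
  refine (hU.measure_pos μ hUne).trans_le (measure_mono_ae ?_)
  filter_upwards [hpos] with y hy hyU
  exact ⟨(hy hyU).ne', hUs hyU⟩

lemma rpow_two_mul_norm_le_rpow_norm_sub {E : Type*} [SeminormedAddCommGroup E] {x y : E} {τ : ℝ}
    (hτ : τ ≤ 0) (hx : 1 ≤ ‖x‖) (hy : y ∈ ball (0 : E) 1) : (2 * ‖x‖) ^ τ ≤ ‖x - y‖ ^ τ := by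
  rw [mem_ball_zero_iff] at hy
  have hxy : 0 < ‖x - y‖ := (sub_pos.2 (hy.trans_le hx)).trans_le (norm_sub_norm_le x y)
  exact Real.rpow_le_rpow_of_nonpos hxy (by linarith [norm_sub_le x y]) hτ

section Potential

variable {E : Type*} [NormedAddCommGroup E] [MeasurableSpace E] {μ : Measure E}

lemma integral_ball_mul_rpow_le_integral [OpensMeasurableSpace E] {g : E → ℝ} {τ : ℝ}
    (hτ : τ ≤ 0) (hg0 : 0 ≤ g) {x : E} (hx : 1 ≤ ‖x‖)
    (hint : Integrable (fun y => g y * ‖x - y‖ ^ τ) μ) :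
    (∫ y in ball 0 1, g y ∂μ) * (2 * ‖x‖) ^ τ ≤ ∫ y, g y * ‖x - y‖ ^ τ ∂μ := by
  have hc : 0 ≤ (2 * ‖x‖) ^ τ := by positivity
  rw [← integral_mul_const]
  calc ∫ y in ball 0 1, g y * (2 * ‖x‖) ^ τ ∂μ
      ≤ ∫ y in ball 0 1, g y * ‖x - y‖ ^ τ ∂μ :=
        integral_mono_of_nonneg (ae_of_all _ fun y => mul_nonneg (hg0 y) hc) hint.integrableOn
          (ae_restrict_of_forall_mem measurableSet_ball fun y hy =>
            mul_le_mul_of_nonneg_left (rpow_two_mul_norm_le_rpow_norm_sub hτ hx hy) (hg0 y))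
    _ ≤ ∫ y, g y * ‖x - y‖ ^ τ ∂μ :=
        setIntegral_le_integral hint (ae_of_all _ fun y => mul_nonneg (hg0 y) (by positivity))

lemma integrableOn_ball_of_integrable_mul_rpow [OpensMeasurableSpace E] {g : E → ℝ} {τ : ℝ}
    (hτ : τ ≤ 0) (hg : AEStronglyMeasurable g μ) (hg0 : 0 ≤ g) {x : E} (hx : 1 ≤ ‖x‖)
    (hint : Integrable (fun y => g y * ‖x - y‖ ^ τ) μ) : IntegrableOn g (ball 0 1) μ := by
  have hc : 0 < (2 * ‖x‖) ^ τ := Real.rpow_pos_of_pos (by linarith) τ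
  refine (hint.integrableOn.const_mul ((2 * ‖x‖) ^ τ)⁻¹).mono' hg.restrict
    (ae_restrict_of_forall_mem measurableSet_ball fun y hy => ?_)
  rw [Real.norm_of_nonneg (hg0 y), ← mul_le_mul_iff_of_pos_left hc, ← mul_assoc,
    mul_inv_cancel₀ hc.ne', one_mul, mul_comm]
  exact mul_le_mul_of_nonneg_left (rpow_two_mul_norm_le_rpow_norm_sub hτ hx hy) (hg0 y)

variable [μ.IsOpenPosMeasure] [NullSingletonClass μ]

lemma integral_rpow_mul_rpow_pos {e r τ : ℝ} {w : E → ℝ} (hw : Continuous w) (hw0 : 0 ≤ w)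
    {y₀ : E} (hy₀ : 0 < w y₀) (x : E)
    (hint : Integrable (fun y => ‖y‖ ^ e * w y ^ r * ‖x - y‖ ^ τ) μ) :
    0 < ∫ y, ‖y‖ ^ e * w y ^ r * ‖x - y‖ ^ τ ∂μ := by
  obtain ⟨ε, hε, hball⟩ := Metric.isOpen_iff.mp (isOpen_lt continuous_const hw) y₀ hy₀
  rw [← setIntegral_univ]
  refine setIntegral_pos_of_ae_pos_on_isOpen
    (ae_of_all _ fun y => by have : 0 ≤ w y := hw0 y; positivity) hint.integrableOn
    (isOpen_ball (x := y₀)) (nonempty_ball.2 hε) (subset_univ _) ?_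
  filter_upwards [measure_eq_zero_iff_ae_notMem.1 ((toFinite {0, x}).measure_zero μ)]
    with y hy hyU
  simp only [mem_insert_iff, mem_singleton_iff, not_or] at hy
  have hwy : 0 < w y := hball hyU
  have hy0 : 0 < ‖y‖ := norm_pos_iff.2 hy.1
  have hxy : 0 < ‖x - y‖ := norm_pos_iff.2 (sub_ne_zero.2 (Ne.symm hy.2))
  positivity

lemma setIntegral_ball_rpow_mul_rpow_pos {e r : ℝ} {w : E → ℝ} (hw0 : ∀ y, 0 < w y)
    (hi : IntegrableOn (fun y => ‖y‖ ^ e * w y ^ r) (ball 0 1) μ) :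
    0 < ∫ y in ball 0 1, ‖y‖ ^ e * w y ^ r ∂μ := by
  refine setIntegral_pos_of_ae_pos_on_isOpen
    (ae_of_all _ fun y => by have := (hw0 y).le; positivity) hi isOpen_ball
    (nonempty_ball.2 one_pos) Subset.rfl ?_
  filter_upwards [measure_eq_zero_iff_ae_notMem.1 (measure_singleton (μ := μ) 0)] with y hy _
  have hy0 : 0 < ‖y‖ := norm_pos_iff.2 hy
  have := hw0 y
  positivity

end Potential

namespace SolvesIE

variable {n : ℕ} {γ δ a b p q : ℝ} {u v : EuclideanSpace ℝ (Fin n) → ℝ}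

theorem symm (h : SolvesIE n γ δ a b p q u v) : SolvesIE n δ γ b a q p v u :=
  ⟨h.2.1, h.1, h.2.2.2, h.2.2.1⟩

variable [NeZero n]

theorem pos_of_exists_pos (h : SolvesIE n γ δ a b p q u v) (hγ : 0 < γ) (hγn : γ < n)
    (hv : Continuous v) (hv0 : ∀ y, 0 ≤ v y) (hvpos : ∃ y, 0 < v y)
    (x : EuclideanSpace ℝ (Fin n)) : 0 < u x := by
  obtain ⟨y₀, hy₀⟩ := hvpos
  rw [h.2.2.1 x]
  exact mul_pos (Rconst_pos hγ hγn) (integral_rpow_mul_rpow_pos hv hv0 hy₀ x (h.1 x))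

theorem pos (h : SolvesIE n γ δ a b p q u v) (hγ : 0 < γ) (hγn : γ < n) (hδ : 0 < δ)
    (hδn : δ < n) (hu : Continuous u) (hv : Continuous v) (hu0 : ∀ x, 0 ≤ u x)
    (hv0 : ∀ x, 0 ≤ v x) (hne : ¬ ∀ x, u x = 0 ∧ v x = 0) (x : EuclideanSpace ℝ (Fin n)) :
    0 < u x ∧ 0 < v x := by
  obtain ⟨x₀, hx₀⟩ := not_forall.1 hne
  have hvpos : ∃ y, 0 < v y := by
    by_cases hux : u x₀ = 0
    · exact ⟨x₀, (hv0 x₀).lt_of_ne' (not_and.1 hx₀ hux)⟩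
    · exact ⟨x₀, h.symm.pos_of_exists_pos hδ hδn hu hu0 ⟨x₀, (hu0 x₀).lt_of_ne' hux⟩ x₀⟩
  have hupos := h.pos_of_exists_pos hγ hγn hv hv0 hvpos
  exact ⟨hupos x, h.symm.pos_of_exists_pos hδ hδn hu hu0 ⟨x, hupos x⟩ x⟩

theorem lower_bound (h : SolvesIE n γ δ a b p q u v) (hγ : 0 < γ) (hγn : γ < n)
    (hv : Continuous v) (hvpos : ∀ y, 0 < v y) :
    ∃ C > (0 : ℝ), ∀ x : EuclideanSpace ℝ (Fin n), 1 ≤ ‖x‖ →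
      C * ‖x‖ ^ (-((n : ℝ) - γ)) ≤ u x := by
  set g : EuclideanSpace ℝ (Fin n) → ℝ := fun y => ‖y‖ ^ a * v y ^ p
  have hτ : γ - n ≤ 0 := by linarith
  have hg0 : 0 ≤ g := fun y => by have := (hvpos y).le; positivity
  have hgm : AEStronglyMeasurable g :=
    ((continuous_norm.measurable.pow_const a).mul
      (hv.measurable.pow_const p)).aestronglyMeasurable
  obtain ⟨x₁, hx₁⟩ := exists_norm_eq (EuclideanSpace ℝ (Fin n)) zero_le_one
  have hK : 0 < ∫ y in ball 0 1, g y := setIntegral_ball_rpow_mul_rpow_pos hvpos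
    (integrableOn_ball_of_integrable_mul_rpow hτ hgm hg0 hx₁.ge (h.1 x₁))
  have hR := Rconst_pos hγ hγn
  refine ⟨Rconst n γ * ((∫ y in ball 0 1, g y) * 2 ^ (γ - n)),
    mul_pos hR (mul_pos hK (Real.rpow_pos_of_pos two_pos _)), fun x hx => ?_⟩
  rw [h.2.2.1 x, neg_sub]
  calc Rconst n γ * ((∫ y in ball 0 1, g y) * 2 ^ (γ - n)) * ‖x‖ ^ (γ - n)
      = Rconst n γ * ((∫ y in ball 0 1, g y) * (2 * ‖x‖) ^ (γ - n)) := by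
        rw [Real.mul_rpow zero_le_two (norm_nonneg x)]; ring
    _ ≤ _ :=
        mul_le_mul_of_nonneg_left (integral_ball_mul_rpow_le_integral hτ hg0 hx (h.1 x)) hR.le

end SolvesIE

theorem IE_positivity_and_lower_bound_general (n : ℕ) (hn : 2 ≤ n) (γ δ a b p q : ℝ)
    (hγ1 : 0 < γ) (hγ2 : γ < n) (hδ1 : 0 < δ) (hδ2 : δ < n)
    (u v : EuclideanSpace ℝ (Fin n) → ℝ)
    (huC : Continuous u) (hvC : Continuous v)
    (hu0 : ∀ x, 0 ≤ u x) (hv0 : ∀ x, 0 ≤ v x)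
    (hIE : SolvesIE n γ δ a b p q u v)
    (hne : ¬ ∀ x, u x = 0 ∧ v x = 0) :
    (∀ x, 0 < u x ∧ 0 < v x) ∧
    ∃ C > (0 : ℝ), ∀ x : EuclideanSpace ℝ (Fin n), 1 ≤ ‖x‖ →
      C * ‖x‖ ^ (-((n : ℝ) - γ)) ≤ u x ∧ C * ‖x‖ ^ (-((n : ℝ) - δ)) ≤ v x := by
  have : NeZero n := ⟨by omega⟩
  have hpos := hIE.pos hγ1 hγ2 hδ1 hδ2 huC hvC hu0 hv0 hne
  obtain ⟨C₁, hC₁, hu⟩ := hIE.lower_bound hγ1 hγ2 hvC fun x => (hpos x).2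
  obtain ⟨C₂, hC₂, hv⟩ := hIE.symm.lower_bound hδ1 hδ2 huC fun x => (hpos x).1
  refine ⟨hpos, min C₁ C₂, lt_min hC₁ hC₂, fun x hx => ⟨?_, ?_⟩⟩
  · exact (mul_le_mul_of_nonneg_right (min_le_left _ _) (by positivity)).trans (hu x hx)
  · exact (mul_le_mul_of_nonneg_right (min_le_right _ _) (by positivity)).trans (hv x hx)

/-- Positivity and the lower bound (LB0): nontrivial nonnegative continuous solutions of
the integral system (IE) are everywhere positive and bounded below by multiples of
`|x|^{-(n-γ)}` and `|x|^{-(n-δ)}` for `|x| ≥ 1`. -/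
theorem IE_positivity_and_lower_bound (n : ℕ) (hn : 2 ≤ n) (γ δ a b p q : ℝ)
    (hγ1 : 0 < γ) (hγ2 : γ < n) (hδ1 : 0 < δ) (hδ2 : δ < n)
    (ha : 0 ≤ a) (hb : 0 ≤ b) (hp : 0 < p) (hq : 0 < q)
    (u v : EuclideanSpace ℝ (Fin n) → ℝ)
    (huC : Continuous u) (hvC : Continuous v)
    (hu0 : ∀ x, 0 ≤ u x) (hv0 : ∀ x, 0 ≤ v x)
    (hIE : SolvesIE n γ δ a b p q u v)
    (hne : ¬ ∀ x, u x = 0 ∧ v x = 0) :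
    (∀ x, 0 < u x ∧ 0 < v x) ∧
    ∃ C > (0 : ℝ), ∀ x : EuclideanSpace ℝ (Fin n), 1 ≤ ‖x‖ →
      C * ‖x‖ ^ (-((n : ℝ) - γ)) ≤ u x ∧ C * ‖x‖ ^ (-((n : ℝ) - δ)) ≤ v x :=
  IE_positivity_and_lower_bound_general n hn γ δ a b p q hγ1 hγ2 hδ1 hδ2 u v huC hvC hu0 hv0 hIE hne
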